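/- Let φ be a smooth, even, nonzero, non-negative-Fourier-transform cutoff with φ̂ supported in {|ξ| ≤ 1/2} and φ̂ = 1 on {|ξ| ≤ 1/4}. For s ∈ ℝ, p ∈ [1,∞), define f_n(x) = 2^{-n(s+1/2)} φ(2^{-(p/2)n}x) sin((17/12)2^n x) and g_n(x) = 2^{-n} φ(2^{-(p/2)n}x). Then the Fourier transform of g_n ∂_x f_n is supported in {(17/12)2^n − 2^{-(p/2)n} ≤ |ξ| ≤ (17/12)2^n + 2^{-(p/2)n}}, so Δ_j(g_n ∂_x f_n) = g_n ∂_x f_n if j = n and vanishes otherwise, and ‖g_n ∂_x f_n‖_{B^s_{p,∞}} = 2^{ns} ‖g_n ∂_x f_n‖_{L^p}. -/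

import Mathlib

open MeasureTheory Real Filter Topology
open scoped ENNReal

noncomputable def FT (f : ℝ → ℂ) (ξ : ℝ) : ℂ :=
  ∫ x : ℝ, Complex.exp (-(Complex.I * (x:ℂ) * (ξ:ℂ))) * f x

noncomputable def FTinv (g : ℝ → ℂ) (x : ℝ) : ℂ :=
  (1 / (2 * Real.pi) : ℝ) * ∫ ξ : ℝ, Complex.exp (Complex.I * (x:ℂ) * (ξ:ℂ)) * g ξ

noncomputable def LPblock (χ φ : ℝ → ℝ) (j : ℤ) (f : ℝ → ℂ) : ℝ → ℂ :=
  if j = -1 then FTinv (fun ξ => (χ ξ : ℂ) * FT f ξ)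
  else if 0 ≤ j then FTinv (fun ξ => ((φ ((2:ℝ) ^ (-j) * ξ) : ℝ) : ℂ) * FT f ξ)
  else 0

noncomputable def besov (χ φ : ℝ → ℝ) (σ : ℝ) (p r : ℝ≥0∞) (f : ℝ → ℂ) : ℝ≥0∞ :=
  if r = ⊤ then
    ⨆ j : ℤ, if -1 ≤ j then ENNReal.ofReal ((2:ℝ) ^ ((j : ℝ) * σ)) * eLpNorm (LPblock χ φ j f) p volume else 0
  else
    (∑' j : ℤ, if -1 ≤ j then (ENNReal.ofReal ((2:ℝ) ^ ((j : ℝ) * σ)) * eLpNorm (LPblock χ φ j f) p volume) ^ r.toReal else 0) ^ (1 / r.toReal)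

noncomputable def besovR (χ φ : ℝ → ℝ) (σ : ℝ) (p r : ℝ≥0∞) (f : ℝ → ℝ) : ℝ :=
  (besov χ φ σ p r (fun x => (f x : ℂ))).toReal

noncomputable def fseq (s p : ℝ) (φ0 : ℝ → ℝ) (n : ℕ) (x : ℝ) : ℝ :=
  (2:ℝ) ^ (-(n:ℝ) * (s + 1/2)) * φ0 ((2:ℝ) ^ (-(p/2) * (n:ℝ)) * x) * Real.sin ((17/12) * (2:ℝ) ^ (n:ℝ) * x)

noncomputable def gseq (p : ℝ) (φ0 : ℝ → ℝ) (n : ℕ) (x : ℝ) : ℝ :=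
  (2:ℝ) ^ (-(n:ℝ)) * φ0 ((2:ℝ) ^ (-(p/2) * (n:ℝ)) * x)


/-! ### Auxiliary lemmas -/

open FourierTransform Complex in
lemma FT_eq (f : ℝ → ℂ) (ξ : ℝ) : FT f ξ = 𝓕 f (ξ / (2 * Real.pi)) := by
  rw [FT, Real.fourier_eq']
  congr 1; ext x; rw [smul_eq_mul]; congr 2
  push_cast [RCLike.inner_apply, conj_trivial]
  have : (Real.pi : ℂ) ≠ 0 := by exact_mod_cast Real.pi_ne_zero
  field_simp

open FourierTransform Complex in
lemma FTinv_eq (g : ℝ → ℂ) (x : ℝ) : FTinv g x = 𝓕⁻ (fun η => g (2 * Real.pi * η)) x := by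
  rw [FTinv, Real.fourierInv_eq']
  have heq : (fun v : ℝ => Complex.exp ((2*Real.pi*(inner ℝ v x : ℝ) : ℝ)*Complex.I) • g (2*Real.pi*v))
      = fun v => Complex.exp (Complex.I*(x:ℂ)*((2*Real.pi*v : ℝ):ℂ)) * g (2*Real.pi*v) := by
    ext v; rw [smul_eq_mul]; congr 2
    push_cast [RCLike.inner_apply, conj_trivial]; ring
  simp only [heq]
  rw [MeasureTheory.Measure.integral_comp_mul_left
    (fun ξ : ℝ => Complex.exp (Complex.I * (x:ℂ) * (ξ:ℂ)) * g ξ) (2 * Real.pi)]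
  have hπ : |(2 * Real.pi)⁻¹| = (2*Real.pi)⁻¹ := abs_of_pos (by positivity)
  rw [hπ, Complex.real_smul]
  norm_num

open FourierTransform in
lemma FT_inversion {f : ℝ → ℂ} (hc : Continuous f) (hi : Integrable f)
    (hFT : Integrable (FT f)) : FTinv (FT f) = f := by
  have h2π : (2 * Real.pi) ≠ 0 := by positivity
  have hFeq : (fun η => FT f (2 * Real.pi * η)) = 𝓕 f := by
    ext η; rw [FT_eq]; congr 1; field_simp
  have h𝓕i : Integrable (𝓕 f) := by
    rw [← hFeq]; exact hFT.comp_mul_left' h2π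
  ext x
  rw [FTinv_eq, hFeq, hc.fourierInv_fourier_eq hi h𝓕i]

open FourierTransform in
lemma FT_continuous {f : ℝ → ℂ} (hf : Integrable f) : Continuous (FT f) := by
  have h : Continuous (𝓕 f) :=
    VectorFourier.fourierIntegral_continuous Real.continuous_fourierChar
      (by exact continuous_inner) hf
  have : Continuous fun ξ : ℝ => 𝓕 f (ξ / (2 * Real.pi)) :=
    h.comp (continuous_id.div_const _)
  simpa [funext (FT_eq f)] using this

lemma integrable_of_decay {h : ℝ → ℝ} (hc : Continuous h)
    (h0 : ∃ C, ∀ x, |h x| ≤ C) (h2 : ∃ C, ∀ x : ℝ, x ^ 2 * |h x| ≤ C) :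
    Integrable h := by
  obtain ⟨C0, h0⟩ := h0; obtain ⟨C2, h2⟩ := h2
  have key : ∀ x : ℝ, ‖h x‖ ≤ (C0 + C2) * (1 + x ^ 2)⁻¹ := by
    intro x
    rw [Real.norm_eq_abs, ← div_eq_mul_inv, le_div_iff₀ (by positivity)]
    have := h0 x; have := h2 x; nlinarith [abs_nonneg (h x), sq_nonneg x]
  exact (integrable_inv_one_add_sq.const_mul (C0 + C2)).mono'
    hc.aestronglyMeasurable (Filter.Eventually.of_forall key)

open FourierTransform Complex in
lemma FT_deriv {f : ℝ → ℂ} (hi : Integrable f) (hd : Differentiable ℝ f)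
    (hi' : Integrable (deriv f)) (ξ : ℝ) :
    FT (deriv f) ξ = Complex.I * ξ * FT f ξ := by
  rw [FT_eq, FT_eq, Real.fourier_deriv hi hd hi']
  simp only [smul_eq_mul]
  have : (Real.pi : ℂ) ≠ 0 := by exact_mod_cast Real.pi_ne_zero
  push_cast; field_simp

lemma FT_mod (ψ : ℝ → ℂ) (ε lam : ℝ) (hε : 0 < ε) (ξ : ℝ) :
    FT (fun x => Complex.exp (Complex.I * lam * x) * ψ (ε * x)) ξ
      = ((ε⁻¹ : ℝ) : ℂ) * FT ψ ((ξ - lam) / ε) := by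
  have hεne : (ε : ℝ) ≠ 0 := hε.ne'
  have key := MeasureTheory.Measure.integral_comp_mul_left
    (fun y : ℝ => Complex.exp (-(Complex.I * (y:ℂ) * (((ξ - lam)/ε : ℝ):ℂ))) * ψ y) ε
  rw [FT]
  have heq : (fun x : ℝ => Complex.exp (-(Complex.I * (x:ℂ) * (ξ:ℂ))) *
      (Complex.exp (Complex.I * lam * x) * ψ (ε * x)))
      = fun x : ℝ => Complex.exp (-(Complex.I * ((ε*x : ℝ):ℂ) * (((ξ - lam)/ε : ℝ):ℂ))) * ψ (ε * x) := by
    ext x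
    rw [← mul_assoc, ← Complex.exp_add]
    congr 2
    have : ((ε:ℂ)) ≠ 0 := by exact_mod_cast hεne
    push_cast; field_simp; ring
  rw [heq, key, abs_of_pos (inv_pos.mpr hε), Complex.real_smul, FT]

lemma norm_exp_I_mul (x c : ℝ) : ‖Complex.exp (-(Complex.I * (x:ℂ) * (c:ℂ)))‖ = 1 := by
  rw [Complex.norm_exp]
  simp [Complex.mul_re]

lemma norm_exp_I_mul' (lam x : ℝ) : ‖Complex.exp (Complex.I * (lam:ℂ) * (x:ℂ))‖ = 1 := by
  have := norm_exp_I_mul x (-lam)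
  rw [show -(Complex.I * (x:ℂ) * ((-lam : ℝ):ℂ)) = Complex.I * (lam:ℂ) * (x:ℂ) by push_cast; ring] at this
  exact this

lemma FT_mul_eq {u v : ℝ → ℂ} (hu_c : Continuous u) (hu_i : Integrable u)
    (huF : Integrable (FT u)) (hv_c : Continuous v) (hv_i : Integrable v) (ξ : ℝ) :
    FT (fun x => u x * v x) ξ
      = ((1 / (2 * Real.pi) : ℝ) : ℂ) * ∫ η : ℝ, FT u η * FT v (ξ - η) := by
  have hinv := FT_inversion hu_c hu_i huF
  set c : ℂ := ((1 / (2 * Real.pi) : ℝ) : ℂ) with hc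
  set F : ℝ → ℝ → ℂ := fun x η =>
    Complex.exp (-(Complex.I * (x:ℂ) * ((ξ - η : ℝ):ℂ))) * (FT u η * v x) with hF
  have claim1 : ∀ x : ℝ, Complex.exp (-(Complex.I * (x:ℂ) * (ξ:ℂ))) * (u x * v x)
      = c * ∫ η : ℝ, F x η := by
    intro x
    have hux : u x = c * ∫ η : ℝ, Complex.exp (Complex.I * (x:ℂ) * (η:ℂ)) * FT u η := by
      conv_lhs => rw [← hinv]
      rfl
    rw [hux]
    rw [show Complex.exp (-(Complex.I * (x:ℂ) * (ξ:ℂ))) *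
        ((c * ∫ η : ℝ, Complex.exp (Complex.I * (x:ℂ) * (η:ℂ)) * FT u η) * v x)
        = c * ((∫ η : ℝ, Complex.exp (Complex.I * (x:ℂ) * (η:ℂ)) * FT u η) *
            (Complex.exp (-(Complex.I * (x:ℂ) * (ξ:ℂ))) * v x)) by ring]
    rw [← MeasureTheory.integral_mul_const]
    congr 1
    apply MeasureTheory.integral_congr_ae
    filter_upwards with η
    rw [hF]
    have : Complex.exp (Complex.I * (x:ℂ) * (η:ℂ)) *
        Complex.exp (-(Complex.I * (x:ℂ) * (ξ:ℂ)))
        = Complex.exp (-(Complex.I * (x:ℂ) * ((ξ - η : ℝ):ℂ))) := by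
      rw [← Complex.exp_add]; congr 1; push_cast; ring
    calc Complex.exp (Complex.I * (x:ℂ) * (η:ℂ)) * FT u η *
          (Complex.exp (-(Complex.I * (x:ℂ) * (ξ:ℂ))) * v x)
        = (Complex.exp (Complex.I * (x:ℂ) * (η:ℂ)) *
            Complex.exp (-(Complex.I * (x:ℂ) * (ξ:ℂ)))) * (FT u η * v x) := by ring
      _ = _ := by rw [this]
  have hFc : Continuous (Function.uncurry F) := by
    apply Continuous.mul
    · apply Complex.continuous_exp.comp
      have h1 : Continuous fun z : ℝ × ℝ => ((z.1 : ℂ)) :=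
        Complex.continuous_ofReal.comp continuous_fst
      have h2 : Continuous fun z : ℝ × ℝ => ((ξ - z.2 : ℝ) : ℂ) :=
        Complex.continuous_ofReal.comp (continuous_const.sub continuous_snd)
      exact ((continuous_const.mul h1).mul h2).neg
    · exact ((FT_continuous hu_i).comp continuous_snd).mul (hv_c.comp continuous_fst)
  have hFi : Integrable (Function.uncurry F) (volume.prod volume) := by
    apply ((hv_i.norm.mul_prod huF.norm).mono' hFc.aestronglyMeasurable)
    filter_upwards with z
    obtain ⟨x, η⟩ := z
    simp only [Function.uncurry_apply_pair, hF, norm_mul, norm_exp_I_mul, one_mul, norm_norm]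
    exact le_of_eq (mul_comm _ _)
  have claim3 : ∀ η : ℝ, (∫ x : ℝ, F x η) = FT u η * FT v (ξ - η) := by
    intro η
    have heq : (fun x : ℝ => F x η) = fun x : ℝ => FT u η *
        (Complex.exp (-(Complex.I * (x:ℂ) * ((ξ - η : ℝ):ℂ))) * v x) := by
      funext x; simp only [hF]; ring
    rw [heq, MeasureTheory.integral_const_mul]; simp only [FT]
  calc FT (fun x => u x * v x) ξ = ∫ x : ℝ, c * ∫ η : ℝ, F x η := by
        rw [FT]; exact MeasureTheory.integral_congr_ae (Filter.Eventually.of_forall claim1)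
    _ = c * ∫ x : ℝ, ∫ η : ℝ, F x η := MeasureTheory.integral_const_mul _ _
    _ = c * ∫ η : ℝ, ∫ x : ℝ, F x η := by rw [MeasureTheory.integral_integral_swap hFi]
    _ = c * ∫ η : ℝ, FT u η * FT v (ξ - η) := by
        congr 1; exact MeasureTheory.integral_congr_ae (Filter.Eventually.of_forall claim3)

lemma FT_mul_support {u v : ℝ → ℂ} (hu_c : Continuous u) (hu_i : Integrable u)
    (huF : Integrable (FT u)) (hv_c : Continuous v) (hv_i : Integrable v)
    {R S : ℝ} (hR : ∀ η, FT u η ≠ 0 → |η| ≤ R) (hS : ∀ η, FT v η ≠ 0 → |η| ≤ S)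
    {ξ : ℝ} (hξ : R + S < |ξ|) : FT (fun x => u x * v x) ξ = 0 := by
  rw [FT_mul_eq hu_c hu_i huF hv_c hv_i]
  have : ∀ η : ℝ, FT u η * FT v (ξ - η) = 0 := by
    intro η
    by_cases h1 : FT u η = 0
    · rw [h1, zero_mul]
    · have hη := hR η h1
      have : FT v (ξ - η) = 0 := by
        by_contra h2
        have := hS _ h2
        have habs : |ξ| ≤ |η| + |ξ - η| := by
          have := abs_add_le η (ξ - η); simpa using this
        linarith
      rw [this, mul_zero]
  simp [this]

lemma intOfReal {f : ℝ → ℝ} (hf : Integrable f) : Integrable (fun x => ((f x : ℝ) : ℂ)) :=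
  hf.ofReal

lemma contOfReal {f : ℝ → ℝ} (hf : Continuous f) : Continuous (fun x => ((f x : ℝ) : ℂ)) :=
  Complex.continuous_ofReal.comp hf

lemma decay_mul {f g : ℝ → ℝ} (hf : Continuous f) (hg : Continuous g)
    (hf0 : ∃ C, ∀ x, |f x| ≤ C) (hf2 : ∃ C, ∀ x : ℝ, x ^ 2 * |f x| ≤ C)
    (hg0 : ∃ C, ∀ x, |g x| ≤ C) :
    Integrable (fun x => f x * g x) := by
  obtain ⟨C0, h0⟩ := hf0; obtain ⟨C2, h2⟩ := hf2; obtain ⟨D0, hD⟩ := hg0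
  have hD0 : 0 ≤ D0 := le_trans (abs_nonneg _) (hD 0)
  apply integrable_of_decay (hf.mul hg)
  · exact ⟨C0 * D0, fun x => by
      rw [Pi.mul_apply, abs_mul]
      exact mul_le_mul (h0 x) (hD x) (abs_nonneg _) (le_trans (abs_nonneg _) (h0 x))⟩
  · refine ⟨C2 * D0, fun x => ?_⟩
    have hC2 : 0 ≤ C2 := le_trans (by positivity) (h2 0)
    rw [Pi.mul_apply, abs_mul, ← mul_assoc]
    exact mul_le_mul (h2 x) (hD x) (abs_nonneg _) hC2

section Phi2
variable {φ0 : ℝ → ℝ} (hsm : ContDiff ℝ (⊤ : ℕ∞) φ0)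
  (hdec : ∀ k m : ℕ, ∃ C : ℝ, ∀ x : ℝ, |x| ^ k * |iteratedDeriv m φ0 x| ≤ C)
  (hsupp : ∀ ξ : ℝ, FT (fun x => (φ0 x : ℂ)) ξ ≠ 0 → |ξ| ≤ 1/2)

include hdec in
lemma phi0_bd0 : ∃ C, ∀ x, |φ0 x| ≤ C := by
  obtain ⟨C, hC⟩ := hdec 0 0
  exact ⟨C, fun x => by simpa [iteratedDeriv_zero] using hC x⟩

include hdec in
lemma phi0_bd2 : ∃ C, ∀ x : ℝ, x ^ 2 * |φ0 x| ≤ C := by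
  obtain ⟨C, hC⟩ := hdec 2 0
  exact ⟨C, fun x => by simpa [iteratedDeriv_zero, sq_abs] using hC x⟩

include hdec in
lemma phi0d_bd0 : ∃ C, ∀ x, |deriv φ0 x| ≤ C := by
  obtain ⟨C, hC⟩ := hdec 0 1
  exact ⟨C, fun x => by simpa [iteratedDeriv_one] using hC x⟩

include hdec in
lemma phi0d_bd2 : ∃ C, ∀ x : ℝ, x ^ 2 * |deriv φ0 x| ≤ C := by
  obtain ⟨C, hC⟩ := hdec 2 1
  exact ⟨C, fun x => by simpa [iteratedDeriv_one, sq_abs] using hC x⟩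

include hsm in
lemma phi0d_cont : Continuous (deriv φ0) := (contDiff_infty_iff_deriv.mp (hsm.of_le (by simp))).2.continuous

include hsm hdec in
lemma phi0_int : Integrable φ0 :=
  integrable_of_decay hsm.continuous (phi0_bd0 hdec) (phi0_bd2 hdec)

include hsm hdec in
lemma phi0d_int : Integrable (deriv φ0) :=
  integrable_of_decay (phi0d_cont hsm) (phi0d_bd0 hdec) (phi0d_bd2 hdec)

include hsm hdec in
lemma psi1_int : Integrable (fun x => φ0 x * deriv φ0 x) :=
  decay_mul hsm.continuous (phi0d_cont hsm) (phi0_bd0 hdec) (phi0_bd2 hdec) (phi0d_bd0 hdec)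

include hsm hdec in
lemma psi2_int : Integrable (fun x => φ0 x * φ0 x) :=
  decay_mul hsm.continuous hsm.continuous (phi0_bd0 hdec) (phi0_bd2 hdec) (phi0_bd0 hdec)

include hsm hdec hsupp in
lemma FTphi_int : Integrable (FT (fun x => (φ0 x : ℂ))) := by
  have hc := FT_continuous (intOfReal (phi0_int hsm hdec))
  apply hc.integrable_of_hasCompactSupport
  apply HasCompactSupport.intro (isCompact_Icc (a := -(1/2 : ℝ)) (b := (1/2 : ℝ)))
  intro ξ hξ
  by_contra hne
  exact hξ (abs_le.mp (hsupp ξ hne) |> fun h => Set.mem_Icc.mpr ⟨h.1, h.2⟩)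

include hsm in
lemma derivPhiC : deriv (fun x : ℝ => ((φ0 x : ℝ) : ℂ)) = fun x => ((deriv φ0 x : ℝ) : ℂ) := by
  funext x
  exact (((hsm.differentiable (by simp)).differentiableAt (x := x)).hasDerivAt.ofReal_comp).deriv

include hsm in
lemma diffPhiC : Differentiable ℝ (fun x : ℝ => ((φ0 x : ℝ) : ℂ)) := fun x =>
  (((hsm.differentiable (by simp)).differentiableAt (x := x)).hasDerivAt.ofReal_comp).differentiableAt

include hsm hdec hsupp in
lemma FTphid_supp : ∀ ξ : ℝ, FT (fun x => ((deriv φ0 x : ℝ) : ℂ)) ξ ≠ 0 → |ξ| ≤ 1/2 := by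
  have key : ∀ ξ : ℝ, FT (fun x => ((deriv φ0 x : ℝ) : ℂ)) ξ
      = Complex.I * ξ * FT (fun x => ((φ0 x : ℝ) : ℂ)) ξ := by
    intro ξ
    conv_lhs => rw [← derivPhiC hsm]
    exact FT_deriv (intOfReal (phi0_int hsm hdec)) (diffPhiC hsm)
      (by rw [derivPhiC hsm]; exact (intOfReal (phi0d_int hsm hdec))) ξ
  intro ξ hne
  rw [key ξ] at hne
  apply hsupp
  intro h0
  exact hne (by rw [h0, mul_zero])

include hsm hdec hsupp in
lemma FTpsi1_supp : ∀ η : ℝ, FT (fun x => ((φ0 x * deriv φ0 x : ℝ) : ℂ)) η ≠ 0 → |η| ≤ 1 := by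
  intro η hne
  by_contra hgt
  push_neg at hgt
  apply hne
  have heq : (fun x => ((φ0 x * deriv φ0 x : ℝ) : ℂ))
      = fun x => ((φ0 x : ℝ):ℂ) * ((deriv φ0 x : ℝ):ℂ) := by funext x; push_cast; ring
  rw [heq]
  exact FT_mul_support (contOfReal hsm.continuous) (intOfReal (phi0_int hsm hdec))
    (FTphi_int hsm hdec hsupp) (contOfReal (phi0d_cont hsm)) (intOfReal (phi0d_int hsm hdec))
    hsupp (FTphid_supp hsm hdec hsupp) (by norm_num at hgt ⊢; linarith)

include hsm hdec hsupp in
lemma FTpsi2_supp : ∀ η : ℝ, FT (fun x => ((φ0 x * φ0 x : ℝ) : ℂ)) η ≠ 0 → |η| ≤ 1 := by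
  intro η hne
  by_contra hgt
  push_neg at hgt
  apply hne
  have heq : (fun x => ((φ0 x * φ0 x : ℝ) : ℂ))
      = fun x => ((φ0 x : ℝ):ℂ) * ((φ0 x : ℝ):ℂ) := by funext x; push_cast; ring
  rw [heq]
  exact FT_mul_support (contOfReal hsm.continuous) (intOfReal (phi0_int hsm hdec))
    (FTphi_int hsm hdec hsupp) (contOfReal hsm.continuous) (intOfReal (phi0_int hsm hdec))
    hsupp hsupp (by norm_num at hgt ⊢; linarith)

include hsm hdec hsupp in
lemma FTpsi1_int : Integrable (FT (fun x => ((φ0 x * deriv φ0 x : ℝ) : ℂ))) := by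
  have hc := FT_continuous (intOfReal (psi1_int hsm hdec))
  apply hc.integrable_of_hasCompactSupport
  apply HasCompactSupport.intro (isCompact_Icc (a := -(1:ℝ)) (b := (1:ℝ)))
  intro ξ hξ
  by_contra hne
  exact hξ (abs_le.mp (FTpsi1_supp hsm hdec hsupp ξ hne) |> fun h => Set.mem_Icc.mpr ⟨h.1, h.2⟩)

include hsm hdec hsupp in
lemma FTpsi2_int : Integrable (FT (fun x => ((φ0 x * φ0 x : ℝ) : ℂ))) := by
  have hc := FT_continuous (intOfReal (psi2_int hsm hdec))
  apply hc.integrable_of_hasCompactSupport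
  apply HasCompactSupport.intro (isCompact_Icc (a := -(1:ℝ)) (b := (1:ℝ)))
  intro ξ hξ
  by_contra hne
  exact hξ (abs_le.mp (FTpsi2_supp hsm hdec hsupp ξ hne) |> fun h => Set.mem_Icc.mpr ⟨h.1, h.2⟩)

end Phi2

lemma integrable_piece {Ψ : ℝ → ℂ} (hΨ : Integrable Ψ) {ε : ℝ} (hε : ε ≠ 0)
    (k : ℂ) (lam ξ : ℝ) :
    Integrable (fun x : ℝ => Complex.exp (-(Complex.I * (x:ℂ) * (ξ:ℂ))) *
      (k * (Complex.exp (Complex.I * (lam:ℂ) * (x:ℂ)) * Ψ (ε * x)))) := by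
  have h1 : Integrable (fun x : ℝ => Ψ (ε * x)) := hΨ.comp_mul_left' hε
  have h2 : Integrable (fun x : ℝ => k * Ψ (ε * x)) := h1.const_mul k
  have heq : (fun x : ℝ => Complex.exp (-(Complex.I * (x:ℂ) * (ξ:ℂ))) *
      (k * (Complex.exp (Complex.I * (lam:ℂ) * (x:ℂ)) * Ψ (ε * x))))
      = fun x : ℝ => (Complex.exp (-(Complex.I * (x:ℂ) * (ξ:ℂ))) *
          Complex.exp (Complex.I * (lam:ℂ) * (x:ℂ))) * (k * Ψ (ε * x)) := by
    funext x; ring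
  rw [heq]
  apply h2.bdd_mul (c := 1)
  · exact (((Complex.continuous_exp.comp (by continuity)).mul
      (Complex.continuous_exp.comp (by continuity)))).aestronglyMeasurable
  · exact Filter.Eventually.of_forall (fun x => by
      rw [norm_mul, norm_exp_I_mul, norm_exp_I_mul', one_mul])

lemma integrable_piece0 {Ψ : ℝ → ℂ} (hΨ : Integrable Ψ) {ε : ℝ} (hε : ε ≠ 0)
    (k : ℂ) (lam : ℝ) :
    Integrable (fun x : ℝ =>
      k * (Complex.exp (Complex.I * (lam:ℂ) * (x:ℂ)) * Ψ (ε * x))) := by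
  have h1 : Integrable (fun x : ℝ => Ψ (ε * x)) := hΨ.comp_mul_left' hε
  have h2 : Integrable (fun x : ℝ => k * Ψ (ε * x)) := h1.const_mul k
  have heq : (fun x : ℝ => k * (Complex.exp (Complex.I * (lam:ℂ) * (x:ℂ)) * Ψ (ε * x)))
      = fun x : ℝ => (Complex.exp (Complex.I * (lam:ℂ) * (x:ℂ))) * (k * Ψ (ε * x)) := by
    funext x; ring
  rw [heq]
  apply h2.bdd_mul (c := 1)
  · exact (Complex.continuous_exp.comp (by continuity)).aestronglyMeasurable
  · exact Filter.Eventually.of_forall (fun x => by rw [norm_exp_I_mul'])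

lemma FT_four_pieces {Ψ1 Ψ2 : ℝ → ℂ} (hΨ1 : Integrable Ψ1) (hΨ2 : Integrable Ψ2)
    (k1 k2 k3 k4 : ℂ) {ε : ℝ} (lam : ℝ) (hε : 0 < ε) (h : ℝ → ℂ)
    (hh : ∀ x : ℝ, h x = k1 * (Complex.exp (Complex.I * (lam:ℂ) * (x:ℂ)) * Ψ1 (ε * x))
      + k2 * (Complex.exp (Complex.I * ((-lam : ℝ):ℂ) * (x:ℂ)) * Ψ1 (ε * x))
      + k3 * (Complex.exp (Complex.I * (lam:ℂ) * (x:ℂ)) * Ψ2 (ε * x))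
      + k4 * (Complex.exp (Complex.I * ((-lam : ℝ):ℂ) * (x:ℂ)) * Ψ2 (ε * x))) :
    ∀ ξ : ℝ, FT h ξ = k1 * (((ε⁻¹ : ℝ):ℂ) * FT Ψ1 ((ξ - lam) / ε))
      + k2 * (((ε⁻¹ : ℝ):ℂ) * FT Ψ1 ((ξ + lam) / ε))
      + k3 * (((ε⁻¹ : ℝ):ℂ) * FT Ψ2 ((ξ - lam) / ε))
      + k4 * (((ε⁻¹ : ℝ):ℂ) * FT Ψ2 ((ξ + lam) / ε)) := by
  intro ξ
  have e1 := integrable_piece hΨ1 hε.ne' k1 lam ξ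
  have e2 := integrable_piece hΨ1 hε.ne' k2 (-lam) ξ
  have e3 := integrable_piece hΨ2 hε.ne' k3 lam ξ
  have e4 := integrable_piece hΨ2 hε.ne' k4 (-lam) ξ
  set f1 : ℝ → ℂ := fun x => Complex.exp (-(Complex.I * (x:ℂ) * (ξ:ℂ))) * (k1 * (Complex.exp (Complex.I * (lam:ℂ) * (x:ℂ)) * Ψ1 (ε * x))) with hf1
  set f2 : ℝ → ℂ := fun x => Complex.exp (-(Complex.I * (x:ℂ) * (ξ:ℂ))) * (k2 * (Complex.exp (Complex.I * ((-lam:ℝ):ℂ) * (x:ℂ)) * Ψ1 (ε * x))) with hf2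
  set f3 : ℝ → ℂ := fun x => Complex.exp (-(Complex.I * (x:ℂ) * (ξ:ℂ))) * (k3 * (Complex.exp (Complex.I * (lam:ℂ) * (x:ℂ)) * Ψ2 (ε * x))) with hf3
  set f4 : ℝ → ℂ := fun x => Complex.exp (-(Complex.I * (x:ℂ) * (ξ:ℂ))) * (k4 * (Complex.exp (Complex.I * ((-lam:ℝ):ℂ) * (x:ℂ)) * Ψ2 (ε * x))) with hf4
  have E12 : Integrable (fun x : ℝ => f1 x + f2 x) := e1.add e2
  have E123 : Integrable (fun x : ℝ => f1 x + f2 x + f3 x) := E12.add e3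
  have I12 : ∫ x : ℝ, (f1 x + f2 x) = (∫ x : ℝ, f1 x) + ∫ x : ℝ, f2 x :=
    MeasureTheory.integral_add e1 e2
  have I123 : ∫ x : ℝ, (f1 x + f2 x + f3 x) = (∫ x : ℝ, (f1 x + f2 x)) + ∫ x : ℝ, f3 x :=
    MeasureTheory.integral_add E12 e3
  have I1234 : ∫ x : ℝ, (f1 x + f2 x + f3 x + f4 x) = (∫ x : ℝ, (f1 x + f2 x + f3 x)) + ∫ x : ℝ, f4 x :=
    MeasureTheory.integral_add E123 e4
  have hsplit : FT h ξ = (∫ x : ℝ, f1 x) + (∫ x : ℝ, f2 x) + (∫ x : ℝ, f3 x) + (∫ x : ℝ, f4 x) := by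
    rw [FT]
    have : ∫ x : ℝ, Complex.exp (-(Complex.I * (x:ℂ) * (ξ:ℂ))) * h x
        = ∫ x : ℝ, (f1 x + f2 x + f3 x + f4 x) := by
      apply MeasureTheory.integral_congr_ae
      filter_upwards with x
      rw [hh x, hf1, hf2, hf3, hf4]; ring
    rw [this, I1234, I123, I12]
  rw [hsplit]
  have key : ∀ (k : ℂ) (μ : ℝ) (Ψ : ℝ → ℂ),
      (∫ x : ℝ, Complex.exp (-(Complex.I * (x:ℂ) * (ξ:ℂ))) * (k * (Complex.exp (Complex.I * (μ:ℂ) * (x:ℂ)) * Ψ (ε * x))))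
      = k * (((ε⁻¹ : ℝ):ℂ) * FT Ψ ((ξ - μ) / ε)) := by
    intro k μ Ψ
    have : (fun x : ℝ => Complex.exp (-(Complex.I * (x:ℂ) * (ξ:ℂ))) * (k * (Complex.exp (Complex.I * (μ:ℂ) * (x:ℂ)) * Ψ (ε * x))))
        = fun x : ℝ => k * (Complex.exp (-(Complex.I * (x:ℂ) * (ξ:ℂ))) * (Complex.exp (Complex.I * (μ:ℂ) * (x:ℂ)) * Ψ (ε * x))) := by
      funext x; ring
    rw [this, MeasureTheory.integral_const_mul]
    congr 1
    exact FT_mod Ψ ε μ hε ξ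
  rw [hf1, hf2, hf3, hf4, key k1 lam Ψ1, key k2 (-lam) Ψ1, key k3 lam Ψ2, key k4 (-lam) Ψ2]
  norm_num [sub_neg_eq_add]

lemma deriv_fseq (s p : ℝ) {φ0 : ℝ → ℝ} (hsm : ContDiff ℝ (⊤ : ℕ∞) φ0) (n : ℕ) (x : ℝ) :
    deriv (fseq s p φ0 n) x
      = (2:ℝ) ^ (-(n:ℝ) * (s + 1/2)) *
        (deriv φ0 ((2:ℝ) ^ (-(p/2) * (n:ℝ)) * x) * (2:ℝ) ^ (-(p/2) * (n:ℝ)) *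
            Real.sin ((17/12) * (2:ℝ) ^ (n:ℝ) * x)
          + φ0 ((2:ℝ) ^ (-(p/2) * (n:ℝ)) * x) *
            (Real.cos ((17/12) * (2:ℝ) ^ (n:ℝ) * x) * ((17/12) * (2:ℝ) ^ (n:ℝ)))) := by
  set A : ℝ := (2:ℝ) ^ (-(n:ℝ) * (s + 1/2))
  set ε : ℝ := (2:ℝ) ^ (-(p/2) * (n:ℝ))
  set lam : ℝ := (17/12) * (2:ℝ) ^ (n:ℝ)
  have hεx : HasDerivAt (fun y : ℝ => ε * y) ε x := by
    simpa using (hasDerivAt_id x).const_mul ε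
  have hlamx : HasDerivAt (fun y : ℝ => lam * y) lam x := by
    simpa using (hasDerivAt_id x).const_mul lam
  have hφεx : HasDerivAt (fun y : ℝ => φ0 (ε * y)) (deriv φ0 (ε * x) * ε) x :=
    (((hsm.differentiable (by simp)).differentiableAt).hasDerivAt).comp x hεx
  have hsinx : HasDerivAt (fun y : ℝ => Real.sin (lam * y)) (Real.cos (lam * x) * lam) x :=
    (Real.hasDerivAt_sin (lam * x)).comp x hlamx
  have H := (hφεx.const_mul A).mul hsinx
  have H2 : HasDerivAt (fseq s p φ0 n)
      (A * (deriv φ0 (ε * x) * ε) * Real.sin (lam * x)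
        + A * φ0 (ε * x) * (Real.cos (lam * x) * lam)) x := by
    exact H
  rw [H2.deriv]
  ring

lemma hfun_eq (s p : ℝ) {φ0 : ℝ → ℝ} (hsm : ContDiff ℝ (⊤ : ℕ∞) φ0) (n : ℕ) :
    ∀ x : ℝ, ((gseq p φ0 n x * deriv (fseq s p φ0 n) x : ℝ) : ℂ)
      = (-((((2:ℝ) ^ (-(n:ℝ) * (s + 1/2)) * (2:ℝ) ^ (-(n:ℝ)) * (2:ℝ) ^ (-(p/2) * (n:ℝ)) : ℝ) : ℂ)) * Complex.I / 2)
          * (Complex.exp (Complex.I * (((17/12) * (2:ℝ) ^ (n:ℝ) : ℝ) : ℂ) * (x:ℂ)) *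
              (fun y : ℝ => ((φ0 y * deriv φ0 y : ℝ) : ℂ)) ((2:ℝ) ^ (-(p/2) * (n:ℝ)) * x))
      + ((((2:ℝ) ^ (-(n:ℝ) * (s + 1/2)) * (2:ℝ) ^ (-(n:ℝ)) * (2:ℝ) ^ (-(p/2) * (n:ℝ)) : ℝ) : ℂ) * Complex.I / 2)
          * (Complex.exp (Complex.I * ((-((17/12) * (2:ℝ) ^ (n:ℝ)) : ℝ) : ℂ) * (x:ℂ)) *
              (fun y : ℝ => ((φ0 y * deriv φ0 y : ℝ) : ℂ)) ((2:ℝ) ^ (-(p/2) * (n:ℝ)) * x))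
      + ((((2:ℝ) ^ (-(n:ℝ) * (s + 1/2)) * (2:ℝ) ^ (-(n:ℝ)) * ((17/12) * (2:ℝ) ^ (n:ℝ)) : ℝ) : ℂ) / 2)
          * (Complex.exp (Complex.I * (((17/12) * (2:ℝ) ^ (n:ℝ) : ℝ) : ℂ) * (x:ℂ)) *
              (fun y : ℝ => ((φ0 y * φ0 y : ℝ) : ℂ)) ((2:ℝ) ^ (-(p/2) * (n:ℝ)) * x))
      + ((((2:ℝ) ^ (-(n:ℝ) * (s + 1/2)) * (2:ℝ) ^ (-(n:ℝ)) * ((17/12) * (2:ℝ) ^ (n:ℝ)) : ℝ) : ℂ) / 2)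
          * (Complex.exp (Complex.I * ((-((17/12) * (2:ℝ) ^ (n:ℝ)) : ℝ) : ℂ) * (x:ℂ)) *
              (fun y : ℝ => ((φ0 y * φ0 y : ℝ) : ℂ)) ((2:ℝ) ^ (-(p/2) * (n:ℝ)) * x)) := by
  intro x
  rw [gseq, deriv_fseq s p hsm n x]
  set A : ℝ := (2:ℝ) ^ (-(n:ℝ) * (s + 1/2))
  set B : ℝ := (2:ℝ) ^ (-(n:ℝ))
  set ε : ℝ := (2:ℝ) ^ (-(p/2) * (n:ℝ))
  set lam : ℝ := (17/12) * (2:ℝ) ^ (n:ℝ)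
  simp only []
  have hsin : ((Real.sin (lam * x) : ℝ) : ℂ) = Complex.sin ((lam * x : ℝ) : ℂ) :=
    (Complex.ofReal_sin _)
  have hcos : ((Real.cos (lam * x) : ℝ) : ℂ) = Complex.cos ((lam * x : ℝ) : ℂ) :=
    (Complex.ofReal_cos _)
  have e1 : Complex.exp ((lam:ℂ) * (x:ℂ) * Complex.I)
      = Complex.exp (Complex.I * (lam:ℂ) * (x:ℂ)) := by
    congr 1; ring
  have e2 : Complex.exp (-((lam:ℂ) * (x:ℂ)) * Complex.I)
      = Complex.exp (Complex.I * (-(lam:ℂ)) * (x:ℂ)) := by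
    congr 1; ring
  push_cast [hsin, hcos]
  rw [Complex.sin, Complex.cos, e1, e2]
  push_cast
  ring


set_option maxHeartbeats 1000000 in
theorem stmt5 (s p : ℝ) (hp : 1 ≤ p)
    (χ φLP : ℝ → ℝ)
    (hχs : ContDiff ℝ (⊤ : ℕ∞) χ) (hφLPs : ContDiff ℝ (⊤ : ℕ∞) φLP)
    (hχ01 : ∀ ξ, χ ξ ∈ Set.Icc (0:ℝ) 1) (hφLP01 : ∀ ξ, φLP ξ ∈ Set.Icc (0:ℝ) 1)
    (hχsupp : ∀ ξ, χ ξ ≠ 0 → |ξ| ≤ 4/3)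
    (hφLPsupp : ∀ ξ, φLP ξ ≠ 0 → 3/4 ≤ |ξ| ∧ |ξ| ≤ 8/3)
    (hpart : ∀ ξ : ℝ, χ ξ + ∑' j : ℕ, φLP ((2:ℝ) ^ (-(j:ℤ)) * ξ) = 1)
    (hφLPone : ∀ ξ : ℝ, 4/3 ≤ |ξ| → |ξ| ≤ 3/2 → φLP ξ = 1)
    (φ0 : ℝ → ℝ) (hφ0smooth : ContDiff ℝ (⊤ : ℕ∞) φ0) (hφ0even : ∀ x, φ0 (-x) = φ0 x)
    (hφ0ne : φ0 ≠ 0)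
    (hφ0dec : ∀ k m : ℕ, ∃ C : ℝ, ∀ x : ℝ, |x| ^ k * |iteratedDeriv m φ0 x| ≤ C)
    (hφ0supp : ∀ ξ : ℝ, FT (fun x => (φ0 x : ℂ)) ξ ≠ 0 → |ξ| ≤ 1/2)
    (hφ0one : ∀ ξ : ℝ, |ξ| ≤ 1/4 → FT (fun x => (φ0 x : ℂ)) ξ = 1) :
    ∃ N : ℕ, ∀ n : ℕ, N ≤ n →
      (Function.support (FT (fun x => ((gseq p φ0 n x * deriv (fseq s p φ0 n) x : ℝ) : ℂ))) ⊆
        {ξ : ℝ | (17/12) * (2:ℝ) ^ (n:ℝ) - (2:ℝ) ^ (-(p/2) * (n:ℝ)) ≤ |ξ| ∧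
                  |ξ| ≤ (17/12) * (2:ℝ) ^ (n:ℝ) + (2:ℝ) ^ (-(p/2) * (n:ℝ))}) ∧
      (∀ j : ℤ, (j = (n : ℤ) → LPblock χ φLP j (fun x => ((gseq p φ0 n x * deriv (fseq s p φ0 n) x : ℝ) : ℂ)) =
                    fun x => ((gseq p φ0 n x * deriv (fseq s p φ0 n) x : ℝ) : ℂ)) ∧
                (-1 ≤ j → j ≠ (n : ℤ) → LPblock χ φLP j (fun x => ((gseq p φ0 n x * deriv (fseq s p φ0 n) x : ℝ) : ℂ)) = 0)) ∧
      besov χ φLP s (ENNReal.ofReal p) ⊤ (fun x => ((gseq p φ0 n x * deriv (fseq s p φ0 n) x : ℝ) : ℂ)) =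
        ENNReal.ofReal ((2:ℝ) ^ ((n:ℝ) * s)) *
          eLpNorm (fun x => ((gseq p φ0 n x * deriv (fseq s p φ0 n) x : ℝ) : ℂ)) (ENNReal.ofReal p) volume := by
  
  refine ⟨4, fun n hn => ?_⟩
  set ε : ℝ := (2:ℝ) ^ (-(p/2) * (n:ℝ)) with hεdef
  set lam : ℝ := (17/12) * (2:ℝ) ^ (n:ℝ) with hlamdef
  set A : ℝ := (2:ℝ) ^ (-(n:ℝ) * (s + 1/2)) with hAdef
  set B : ℝ := (2:ℝ) ^ (-(n:ℝ)) with hBdef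
  set hfun : ℝ → ℂ := fun x : ℝ => ((gseq p φ0 n x * deriv (fseq s p φ0 n) x : ℝ) : ℂ) with hhfun
  have hε : 0 < ε := Real.rpow_pos_of_pos two_pos _
  have htpos : 0 < B := Real.rpow_pos_of_pos two_pos _
  have hn0 : (0:ℝ) ≤ (n:ℝ) := Nat.cast_nonneg n
  have hεle1 : ε ≤ 1 := by
    apply Real.rpow_le_one_of_one_le_of_nonpos one_le_two
    nlinarith
  have h2n16 : (16:ℝ) ≤ (2:ℝ)^(n:ℝ) := by
    calc (16:ℝ) = (2:ℝ)^((4:ℕ):ℝ) := by rw [Real.rpow_natCast]; norm_num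
    _ ≤ (2:ℝ)^(n:ℝ) := Real.rpow_le_rpow_of_exponent_le one_le_two (by exact_mod_cast hn)
  have hlam_big : 68/3 ≤ lam := by rw [hlamdef]; nlinarith
  have hBlam : B * lam = 17/12 := by
    rw [hBdef, hlamdef]
    have h1 : (2:ℝ)^(-(n:ℝ)) * (2:ℝ)^((n:ℝ)) = 1 := by
      rw [← Real.rpow_add two_pos]; norm_num
    linear_combination (17/12) * h1
  have hBε : B * ε ≤ 1/64 := by
    rw [hBdef, hεdef, ← Real.rpow_add two_pos]
    calc (2:ℝ)^(-(n:ℝ) + -(p/2)*(n:ℝ)) ≤ (2:ℝ)^(-6:ℝ) := by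
          apply Real.rpow_le_rpow_of_exponent_le one_le_two
          have hn4 : (4:ℝ) ≤ (n:ℝ) := by exact_mod_cast hn
          nlinarith
      _ = 1/64 := by
          rw [show (-6:ℝ) = ((-6:ℤ):ℝ) by norm_num, Real.rpow_intCast]
          norm_num
  have hΨ1i : Integrable (fun y : ℝ => ((φ0 y * deriv φ0 y : ℝ) : ℂ)) :=
    intOfReal (psi1_int hφ0smooth hφ0dec)
  have hΨ2i : Integrable (fun y : ℝ => ((φ0 y * φ0 y : ℝ) : ℂ)) :=
    intOfReal (psi2_int hφ0smooth hφ0dec)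
  have hform := FT_four_pieces hΨ1i hΨ2i
    (-(((A * B * ε : ℝ) : ℂ)) * Complex.I / 2) ((((A * B * ε : ℝ)) : ℂ) * Complex.I / 2)
    ((((A * B * lam : ℝ)) : ℂ) / 2) ((((A * B * lam : ℝ)) : ℂ) / 2)
    lam hε hfun (hfun_eq s p hφ0smooth n)
  have hsupp1 := FTpsi1_supp hφ0smooth hφ0dec hφ0supp
  have hsupp2 := FTpsi2_supp hφ0smooth hφ0dec hφ0supp
  have hzero : ∀ ξ : ℝ, ¬(|ξ - lam| ≤ ε) → ¬(|ξ + lam| ≤ ε) → FT hfun ξ = 0 := by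
    intro ξ h1 h2
    rw [hform ξ]
    have hz : ∀ (Ψ : ℝ → ℂ), (∀ η, FT Ψ η ≠ 0 → |η| ≤ 1) → ∀ μ : ℝ, ¬(|ξ - μ| ≤ ε) →
        FT Ψ ((ξ - μ)/ε) = 0 := by
      intro Ψ hΨ μ hμ
      by_contra hne
      have h := hΨ _ hne
      rw [abs_div, abs_of_pos hε, div_le_one hε] at h
      exact hμ h
    have z1 := hz _ hsupp1 lam h1
    have z2 : FT (fun y : ℝ => ((φ0 y * deriv φ0 y : ℝ) : ℂ)) ((ξ + lam)/ε) = 0 := by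
      have h := hz _ hsupp1 (-lam) (by rwa [sub_neg_eq_add])
      rwa [sub_neg_eq_add] at h
    have z3 := hz _ hsupp2 lam h1
    have z4 : FT (fun y : ℝ => ((φ0 y * φ0 y : ℝ) : ℂ)) ((ξ + lam)/ε) = 0 := by
      have h := hz _ hsupp2 (-lam) (by rwa [sub_neg_eq_add])
      rwa [sub_neg_eq_add] at h
    rw [z1, z2, z3, z4]
    ring
  have hann : ∀ ξ : ℝ, FT hfun ξ ≠ 0 → lam - ε ≤ |ξ| ∧ |ξ| ≤ lam + ε := by
    intro ξ hne
    have habs : |ξ - lam| ≤ ε ∨ |ξ + lam| ≤ ε := by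
      by_contra hc
      push_neg at hc
      exact hne (hzero ξ (not_le.mpr hc.1) (not_le.mpr hc.2))
    have hlampos : (0:ℝ) < lam := by linarith
    rcases habs with h | h
    · have hh := abs_sub_abs_le_abs_sub ξ lam
      have hh2 := abs_sub_abs_le_abs_sub lam ξ
      rw [abs_sub_comm] at hh2
      rw [abs_of_pos hlampos] at hh hh2
      constructor <;> linarith
    · have hh := abs_sub_abs_le_abs_sub ξ (-lam)
      have hh2 := abs_sub_abs_le_abs_sub (-lam) ξ
      rw [abs_sub_comm] at hh2
      rw [sub_neg_eq_add] at hh hh2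
      rw [abs_neg, abs_of_pos hlampos] at hh hh2
      constructor <;> linarith
  have hΨ1c : Continuous (fun y : ℝ => ((φ0 y * deriv φ0 y : ℝ) : ℂ)) :=
    contOfReal (hφ0smooth.continuous.mul (phi0d_cont hφ0smooth))
  have hΨ2c : Continuous (fun y : ℝ => ((φ0 y * φ0 y : ℝ) : ℂ)) :=
    contOfReal (hφ0smooth.continuous.mul hφ0smooth.continuous)
  have hfun_formula := funext (hfun_eq s p hφ0smooth n)
  have hfun_cont : Continuous hfun := by
    rw [hhfun, hfun_formula]
    have hexp : ∀ c : ℝ, Continuous fun x : ℝ => Complex.exp (Complex.I * (c:ℂ) * (x:ℂ)) :=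
      fun c => Complex.continuous_exp.comp (continuous_const.mul Complex.continuous_ofReal)
    have hscale1 : Continuous fun x : ℝ => (fun y : ℝ => ((φ0 y * deriv φ0 y : ℝ) : ℂ)) ((2:ℝ) ^ (-(p/2) * (n:ℝ)) * x) :=
      hΨ1c.comp (continuous_const.mul continuous_id)
    have hscale2 : Continuous fun x : ℝ => (fun y : ℝ => ((φ0 y * φ0 y : ℝ) : ℂ)) ((2:ℝ) ^ (-(p/2) * (n:ℝ)) * x) :=
      hΨ2c.comp (continuous_const.mul continuous_id)
    exact ((((continuous_const.mul ((hexp _).mul hscale1)).add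
      (continuous_const.mul ((hexp _).mul hscale1))).add
      (continuous_const.mul ((hexp _).mul hscale2))).add
      (continuous_const.mul ((hexp _).mul hscale2)))
  have hfun_int : Integrable hfun := by
    rw [hhfun, hfun_formula]
    exact (((integrable_piece0 hΨ1i hε.ne' _ lam).add
      (integrable_piece0 hΨ1i hε.ne' _ (-lam))).add
      (integrable_piece0 hΨ2i hε.ne' _ lam)).add
      (integrable_piece0 hΨ2i hε.ne' _ (-lam))
  have hterm : ∀ (F : ℝ → ℂ), Integrable F → ∀ (μ : ℝ) (k : ℂ),
      Integrable (fun ξ : ℝ => k * (((ε⁻¹ : ℝ):ℂ) * F ((ξ - μ)/ε))) := by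
    intro F hF μ k
    have h1 : Integrable (fun ξ : ℝ => F (ε⁻¹ * ξ)) := hF.comp_mul_left' (inv_ne_zero hε.ne')
    have h2 : Integrable (fun ξ : ℝ => F (ε⁻¹ * (ξ - μ))) := h1.comp_sub_right μ
    have heq : (fun ξ : ℝ => k * (((ε⁻¹ : ℝ):ℂ) * F ((ξ - μ)/ε)))
        = fun ξ : ℝ => (k * ((ε⁻¹ : ℝ):ℂ)) * F (ε⁻¹ * (ξ - μ)) := by
      funext ξ; rw [div_eq_inv_mul]; ring
    rw [heq]
    exact h2.const_mul _
  have hterm' : ∀ (F : ℝ → ℂ), Integrable F → ∀ (k : ℂ),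
      Integrable (fun ξ : ℝ => k * (((ε⁻¹ : ℝ):ℂ) * F ((ξ + lam)/ε))) := by
    intro F hF k
    have h := hterm F hF (-lam) k
    simpa only [sub_neg_eq_add] using h
  have hFT_int : Integrable (FT hfun) := by
    rw [funext hform]
    exact (((hterm _ (FTpsi1_int hφ0smooth hφ0dec hφ0supp) lam _).add
      (hterm' _ (FTpsi1_int hφ0smooth hφ0dec hφ0supp) _)).add
      (hterm _ (FTpsi2_int hφ0smooth hφ0dec hφ0supp) lam _)).add
      (hterm' _ (FTpsi2_int hφ0smooth hφ0dec hφ0supp) _)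
  have hLPn : LPblock χ φLP (n:ℤ) hfun = hfun := by
    rw [LPblock, if_neg (by omega), if_pos (Int.natCast_nonneg n)]
    have hzt : ((2:ℝ)^(-(n:ℤ)) : ℝ) = B := by
      rw [← Real.rpow_intCast, hBdef]
      push_cast
      rfl
    have key : (fun ξ => ((φLP ((2:ℝ)^(-(n:ℤ)) * ξ) : ℝ):ℂ) * FT hfun ξ) = FT hfun := by
      funext ξ
      by_cases hz : FT hfun ξ = 0
      · rw [hz, mul_zero]
      · obtain ⟨ha1, ha2⟩ := hann ξ hz
        have harg : |(2:ℝ)^(-(n:ℤ)) * ξ| = B * |ξ| := by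
          rw [abs_mul, hzt, abs_of_pos htpos]
        have hφ1 : φLP ((2:ℝ)^(-(n:ℤ)) * ξ) = 1 := by
          apply hφLPone
          · rw [harg]
            nlinarith [mul_le_mul_of_nonneg_left ha1 htpos.le]
          · rw [harg]
            nlinarith [mul_le_mul_of_nonneg_left ha2 htpos.le]
        rw [hφ1]
        norm_num
    rw [key]
    exact FT_inversion hfun_cont hfun_int hFT_int
  have hLPz : ∀ j : ℤ, -1 ≤ j → j ≠ (n:ℤ) → LPblock χ φLP j hfun = 0 := by
    intro j hj hjn
    by_cases hjm : j = -1
    · subst hjm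
      rw [LPblock, if_pos rfl]
      have key : (fun ξ => ((χ ξ : ℝ):ℂ) * FT hfun ξ) = fun _ : ℝ => (0:ℂ) := by
        funext ξ
        by_cases hz : FT hfun ξ = 0
        · rw [hz, mul_zero]
        · obtain ⟨ha1, _⟩ := hann ξ hz
          have hχ0 : χ ξ = 0 := by
            by_contra hc
            have := hχsupp ξ hc
            linarith
          rw [hχ0]
          norm_num
      rw [key]
      funext x
      simp [FTinv]
    · have hj0 : 0 ≤ j := by omega
      rw [LPblock, if_neg hjm, if_pos hj0]
      have hupos : (0:ℝ) < (2:ℝ)^(-j) := zpow_pos two_pos _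
      have hu : ((2:ℝ)^(-j) : ℝ) = (2:ℝ)^(((-j : ℤ)):ℝ) := (Real.rpow_intCast 2 (-j)).symm
      have key : (fun ξ => ((φLP ((2:ℝ)^(-j) * ξ) : ℝ):ℂ) * FT hfun ξ) = fun _ : ℝ => (0:ℂ) := by
        funext ξ
        by_cases hz : FT hfun ξ = 0
        · rw [hz, mul_zero]
        · obtain ⟨ha1, ha2⟩ := hann ξ hz
          have hφz : φLP ((2:ℝ)^(-j) * ξ) = 0 := by
            by_contra hc
            obtain ⟨hl, hr⟩ := hφLPsupp _ hc
            rw [abs_mul, abs_of_pos hupos] at hl hr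
            rcases lt_or_gt_of_ne hjn with hlt | hgt
            · have hj1 : (j:ℝ) + 1 ≤ (n:ℝ) := by exact_mod_cast (by omega : j + 1 ≤ (n:ℤ))
              have h2B : 2 * B ≤ (2:ℝ)^(-j) := by
                rw [hu, hBdef]
                have hx : (2:ℝ) * (2:ℝ)^(-(n:ℝ)) = (2:ℝ)^(1 + -(n:ℝ)) := by
                  rw [Real.rpow_add two_pos, Real.rpow_one]
                rw [hx]
                apply Real.rpow_le_rpow_of_exponent_le one_le_two
                push_cast
                linarith
              nlinarith [mul_le_mul_of_nonneg_right h2B (abs_nonneg ξ),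
                mul_le_mul_of_nonneg_left ha1 (by positivity : (0:ℝ) ≤ 2*B)]
            · have hj1 : (n:ℝ) + 1 ≤ (j:ℝ) := by exact_mod_cast (by omega : (n:ℤ) + 1 ≤ j)
              have h2B : (2:ℝ)^(-j) ≤ B/2 := by
                rw [hu, hBdef]
                have hx : (2:ℝ)^(-(n:ℝ))/2 = (2:ℝ)^(-(n:ℝ) + -1) := by
                  rw [Real.rpow_add two_pos]
                  rw [show ((-1:ℝ)) = ((-1:ℤ):ℝ) by norm_num, Real.rpow_intCast]
                  norm_num
                  ring
                rw [hx]
                apply Real.rpow_le_rpow_of_exponent_le one_le_two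
                push_cast
                linarith
              nlinarith [mul_le_mul_of_nonneg_right h2B (abs_nonneg ξ),
                mul_le_mul_of_nonneg_left ha2 (by positivity : (0:ℝ) ≤ B/2)]
          rw [hφz]
          norm_num
      rw [key]
      funext x
      simp [FTinv]
  refine ⟨?_, fun j => ⟨fun hj => by rw [hj]; exact hLPn, fun hj hjn => hLPz j hj hjn⟩, ?_⟩
  · intro ξ hξ
    exact hann ξ (Function.mem_support.mp hξ)
  · rw [besov, if_pos rfl]
    have hcast : ENNReal.ofReal ((2:ℝ) ^ ((((n:ℤ)):ℝ) * s)) = ENNReal.ofReal ((2:ℝ) ^ ((n:ℝ) * s)) := by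
      norm_num
    apply le_antisymm
    · apply iSup_le
      intro j
      split_ifs with hj
      · by_cases hjn : j = (n:ℤ)
        · subst hjn
          rw [hLPn, hcast]
        · rw [hLPz j hj hjn, eLpNorm_zero, mul_zero]
          exact zero_le
      · exact zero_le
    · refine le_trans ?_ (le_iSup _ ((n:ℤ)))
      rw [if_pos (by omega : (-1:ℤ) ≤ ((n:ℕ):ℤ)), hLPn, hcast]
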